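/- arXiv:2008.09936 — 2 statements merged into one kernel-verified Lean document; each statement's English description precedes it below -/
import Mathlib

section
/- Let μ, ν be finite measures on ℝ with finite first moments and μ ≤_E ν, with μ(ℝ) < ν(ℝ). Define β = (ν(ℝ)-μ(ℝ)) δ_{(\bar{ν}-\bar{μ})/(ν(ℝ)-μ(ℝ))}. Then β ≤_cx ν - μ. In particular, P_ν(k) - P_μ(k) ≥ ((ν(ℝ)-μ(ℝ))k - (\bar{ν}-\bar{μ}))^+ for all k. -/
open MeasureTheory Set Filter

noncomputable def pot (eta : Measure ℝ) (k : ℝ) : ℝ := ∫ x, max (k - x) 0 ∂eta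

noncomputable def cpot (eta : Measure ℝ) (k : ℝ) : ℝ := ∫ x, max (x - k) 0 ∂eta

/-- `c` is the convex hull (largest convex minorant) of `f`. -/
def IsConvexHull (f c : ℝ → ℝ) : Prop :=
  ConvexOn ℝ Set.univ c ∧ (∀ x, c x ≤ f x) ∧
    ∀ g : ℝ → ℝ, ConvexOn ℝ Set.univ g → (∀ x, g x ≤ f x) → ∀ x, g x ≤ c x

/-- Convex order: `∫ f dη ≤ ∫ f dχ` for all convex `f` for which both integrals exist. -/
def Cx (eta chi : Measure ℝ) : Prop :=
  ∀ f : ℝ → ℝ, ConvexOn ℝ Set.univ f → Integrable f eta → Integrable f chi →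
    ∫ x, f x ∂eta ≤ ∫ x, f x ∂chi

/-- Extended convex order: `∫ f dη ≤ ∫ f dχ` for all nonnegative convex `f`. -/
def ECx (eta chi : Measure ℝ) : Prop :=
  ∀ f : ℝ → ℝ, ConvexOn ℝ Set.univ f → (∀ x, 0 ≤ f x) →
    ∫⁻ x, ENNReal.ofReal (f x) ∂eta ≤ ∫⁻ x, ENNReal.ofReal (f x) ∂chi

/-- The class `𝒟(a, b)`: nonnegative, nondecreasing, convex functions vanishing at `-∞`
and asymptotic to `a * z - b` at `+∞`. -/
def MemD (a b : ℝ) (f : ℝ → ℝ) : Prop :=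
  ConvexOn ℝ Set.univ f ∧ Monotone f ∧ (∀ x, 0 ≤ f x) ∧
    Tendsto f atBot (nhds 0) ∧
    Tendsto (fun z => f z - (a * z - b)) atTop (nhds 0)

/-- `S` is the shadow of `μ` in `ν`. -/
def IsShadow (mu nu S : Measure ℝ) : Prop :=
  Cx mu S ∧ S ≤ nu ∧ ∀ eta : Measure ℝ, Cx mu eta → eta ≤ nu → Cx S eta

/-- `T` is the counter-shadow of `μ` in `ν`. -/
def IsCounterShadow (mu nu T : Measure ℝ) : Prop :=
  Cx mu T ∧ T ≤ nu ∧ ∀ eta : Measure ℝ, Cx mu eta → eta ≤ nu → Cx eta T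

/-! The gap `ν - μ` dominates, in convex order, the point mass `β` carrying the excess mass
`ν(ℝ) - μ(ℝ)` at the barycenter `m` of the excess first moment. Given a convex `f`, subtract its
tangent line `ℓ` at `m`: `f - ℓ` is convex and nonnegative, so `μ ≤_E ν` gives
`∫ (f - ℓ) dμ ≤ ∫ (f - ℓ) dν`, while `∫ ℓ dν - ∫ ℓ dμ = (ν(ℝ) - μ(ℝ)) f(m)` by the choice of `m`.
The put-potential bound is the case `f x = (k - x)⁺`. -/

theorem ConvexOn.add_rightDeriv_mul_sub_le {S : Set ℝ} {f : ℝ → ℝ} (hf : ConvexOn ℝ S f)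
    {m x : ℝ} (hm : m ∈ interior S) (hx : x ∈ S) :
    f m + derivWithin f (Ioi m) m * (x - m) ≤ f x := by
  rcases lt_trichotomy x m with hxm | rfl | hmx
  · have hslope : slope f x m ≤ derivWithin f (Ioi m) m :=
      (hf.slope_le_leftDeriv_of_mem_interior hx hm hxm).trans
        (hf.leftDeriv_le_rightDeriv_of_mem_interior hm)
    rw [slope_def_field, div_le_iff₀ (sub_pos.mpr hxm)] at hslope
    linarith
  · simp
  · have hslope := hf.rightDeriv_le_slope_of_mem_interior hm hx hmx
    rw [slope_def_field, le_div_iff₀ (sub_pos.mpr hmx)] at hslope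
    linarith

theorem convexOn_max_sub_zero (k : ℝ) : ConvexOn ℝ univ (fun x : ℝ => max (k - x) 0) :=
  ((convexOn_const k convex_univ).sub (concaveOn_id convex_univ)).sup
    (convexOn_const 0 convex_univ)

theorem concaveOn_const_add_mul_sub (c s m : ℝ) :
    ConcaveOn ℝ univ (fun x : ℝ => c + s * (x - m)) :=
  ⟨convex_univ, fun x _ y _ a b _ _ hab => le_of_eq (by
    simp only [smul_eq_mul]; linear_combination (c - s * m) * hab)⟩

theorem MeasureTheory.Integrable.const_add_mul_sub {η : Measure ℝ} [IsFiniteMeasure η]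
    (hη : Integrable (fun x => x) η) (c s m : ℝ) : Integrable (fun x => c + s * (x - m)) η :=
  (integrable_const c).add ((hη.sub (integrable_const m)).const_mul s)

theorem integral_const_add_mul_sub (η : Measure ℝ) [IsFiniteMeasure η]
    (hη : Integrable (fun x => x) η) (c s m : ℝ) :
    ∫ x, c + s * (x - m) ∂η = η.real univ * c + s * (∫ x, x ∂η - η.real univ * m) := by
  have hsub : Integrable (fun x => x - m) η := hη.sub (integrable_const m)
  rw [integral_add (integrable_const c) (hsub.const_mul s),
    integral_const_mul, integral_sub hη (integrable_const m), integral_const, integral_const]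
  simp only [smul_eq_mul]

namespace ECx

variable {μ ν : Measure ℝ}

theorem integral_le (hE : ECx μ ν) {g : ℝ → ℝ} (hg : ConvexOn ℝ univ g) (hg0 : ∀ x, 0 ≤ g x)
    (hgμ : Integrable g μ) (hgν : Integrable g ν) : ∫ x, g x ∂μ ≤ ∫ x, g x ∂ν := by
  have h := hE g hg hg0
  rwa [← ofReal_integral_eq_lintegral_ofReal hgμ (.of_forall hg0),
    ← ofReal_integral_eq_lintegral_ofReal hgν (.of_forall hg0),
    ENNReal.ofReal_le_ofReal_iff (integral_nonneg hg0)] at h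

theorem integral_sub_le_integral_sub (hE : ECx μ ν) {f ℓ : ℝ → ℝ} (hf : ConvexOn ℝ univ f)
    (hℓ : ConcaveOn ℝ univ ℓ) (hℓf : ∀ x, ℓ x ≤ f x)
    (hfμ : Integrable f μ) (hfν : Integrable f ν) (hℓμ : Integrable ℓ μ) (hℓν : Integrable ℓ ν) :
    ∫ x, f x ∂μ - ∫ x, ℓ x ∂μ ≤ ∫ x, f x ∂ν - ∫ x, ℓ x ∂ν := by
  rw [← integral_sub hfμ hℓμ, ← integral_sub hfν hℓν]
  exact hE.integral_le (hf.sub hℓ) (fun x => sub_nonneg.mpr (hℓf x))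
    (hfμ.sub hℓμ) (hfν.sub hℓν)

theorem mass_gap_mul_add_integral_le [IsFiniteMeasure μ] [IsFiniteMeasure ν] (hE : ECx μ ν)
    (hμ : Integrable (fun x => x) μ) (hν : Integrable (fun x => x) ν) {m : ℝ}
    (hm : (ν.real univ - μ.real univ) * m = ∫ x, x ∂ν - ∫ x, x ∂μ)
    {f : ℝ → ℝ} (hf : ConvexOn ℝ univ f) (hfμ : Integrable f μ) (hfν : Integrable f ν) :
    (ν.real univ - μ.real univ) * f m + ∫ x, f x ∂μ ≤ ∫ x, f x ∂ν := by
  set s := derivWithin f (Ioi m) m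
  have h := hE.integral_sub_le_integral_sub hf
    (concaveOn_const_add_mul_sub (f m) s m)
    (fun x => hf.add_rightDeriv_mul_sub_le (by simp) (mem_univ x))
    hfμ hfν (hμ.const_add_mul_sub _ s m) (hν.const_add_mul_sub _ s m)
  rw [integral_const_add_mul_sub μ hμ, integral_const_add_mul_sub ν hν] at h
  linear_combination h + s * hm

end ECx

theorem stmt11 (mu nu : Measure ℝ) [IsFiniteMeasure mu] [IsFiniteMeasure nu]
    (hintm : Integrable (fun x => x) mu) (hintn : Integrable (fun x => x) nu)
    (hE : ECx mu nu) (hmass : mu Set.univ < nu Set.univ) :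
    (∀ f : ℝ → ℝ, ConvexOn ℝ Set.univ f → Integrable f mu → Integrable f nu →
      ((nu Set.univ).toReal - (mu Set.univ).toReal) *
          f ((∫ x, x ∂nu - ∫ x, x ∂mu) / ((nu Set.univ).toReal - (mu Set.univ).toReal))
        + ∫ x, f x ∂mu ≤ ∫ x, f x ∂nu) ∧
    (∀ k : ℝ,
      max (((nu Set.univ).toReal - (mu Set.univ).toReal) * k - (∫ x, x ∂nu - ∫ x, x ∂mu)) 0
        ≤ pot nu k - pot mu k) := by
  simp only [← measureReal_def]
  have hgap : 0 < nu.real univ - mu.real univ :=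
    sub_pos.mpr ((ENNReal.toReal_lt_toReal (measure_ne_top _ _) (measure_ne_top _ _)).mpr hmass)
  set m := (∫ x, x ∂nu - ∫ x, x ∂mu) / (nu.real univ - mu.real univ)
  have hm : (nu.real univ - mu.real univ) * m = ∫ x, x ∂nu - ∫ x, x ∂mu :=
    mul_div_cancel₀ _ hgap.ne'
  have hconvex (f : ℝ → ℝ) (hf : ConvexOn ℝ univ f) (hfμ : Integrable f mu)
      (hfν : Integrable f nu) : (nu.real univ - mu.real univ) * f m + ∫ x, f x ∂mu ≤ ∫ x, f x ∂nu :=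
    hE.mass_gap_mul_add_integral_le hintm hintn hm hf hfμ hfν
  refine ⟨hconvex, fun k => ?_⟩
  have hput := hconvex _ (convexOn_max_sub_zero k) ((integrable_const k).sub hintm).pos_part
    ((integrable_const k).sub hintn).pos_part
  rw [mul_max_of_nonneg _ _ hgap.le, mul_zero, mul_sub, hm] at hput
  unfold pot
  linarith
end

section
/- Let μ, ν be finite measures on ℝ with finite first moments and μ ≤_E ν. Then the convex hull (P_ν - P_μ)^c belongs to 𝒟(ν(ℝ)-μ(ℝ), \bar{ν}-\bar{μ}); i.e., it is nonnegative, nondecreasing, convex, tends to 0 at -∞ and is asymptotic to k ↦ (ν(ℝ)-μ(ℝ))k - (\bar{ν}-\bar{μ}) at +∞. -/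
/-!
Let `ℓ(k) = (ν(ℝ) - μ(ℝ)) k - (ν̄ - μ̄)` and `C_η(k) = ∫ (x - k)⁺ dη`. Put–call parity
`P_η(k) - C_η(k) = η(ℝ) k - η̄` gives `P_ν - P_μ - ℓ = C_ν - C_μ`. Testing `μ ≤_E ν` against
`(k - x)⁺` and `(x - k)⁺` shows that `P_ν - P_μ` and `C_ν - C_μ` are nonnegative, so `max ℓ 0` is a
convex minorant of `P_ν - P_μ` and hence `max ℓ 0 ≤ c ≤ P_ν - P_μ`. At `-∞` the upper bound tends
to `0`; at `+∞` the gap `c - ℓ` is squeezed between `0` and `C_ν - C_μ → 0`. Finally, a convex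
function with a finite limit at `-∞` is nondecreasing.
-/

open MeasureTheory Set Filter

theorem ConvexOn.monotone_of_tendsto_atBot {f : ℝ → ℝ} {l : ℝ} (hf : ConvexOn ℝ univ f)
    (hl : Tendsto f atBot (nhds l)) : Monotone f := by
  intro x y hxy
  by_contra! hyx
  have hxy' : x < y := lt_of_le_of_ne hxy (by rintro rfl; exact lt_irrefl _ hyx)
  set s := (f y - f x) / (y - x)
  have hs : s < 0 := div_neg_of_neg_of_pos (by linarith) (by linarith)
  have hbelow : ∀ z < x, f x + s * (z - x) ≤ f z := by
    intro z hz
    have hslope := hf.slope_mono_adjacent (mem_univ z) (mem_univ y) hz hxy'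
    rw [div_le_iff₀ (by linarith)] at hslope
    nlinarith
  have hline : Tendsto (fun z => f x + s * (z - x)) atBot atTop :=
    tendsto_atTop_add_const_left _ _
      ((tendsto_atBot_add_const_right _ (-x) tendsto_id).const_mul_atBot_of_neg hs)
  exact not_tendsto_nhds_of_tendsto_atTop
    (tendsto_atTop_mono' _ ((eventually_lt_atBot x).mono hbelow) hline) l hl

theorem convexOn_max_affine_zero (a b : ℝ) : ConvexOn ℝ univ (fun x : ℝ => max (a * x - b) 0) :=
  (((LinearMap.mulLeft ℝ a).convexOn convex_univ).sub (concaveOn_const b convex_univ)).sup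
    (convexOn_const 0 convex_univ)

theorem ECx.integral_le_s12 {mu nu : Measure ℝ} (hE : ECx mu nu) {f : ℝ → ℝ}
    (hf : ConvexOn ℝ univ f) (hf0 : ∀ x, 0 ≤ f x) (hmu : Integrable f mu)
    (hnu : Integrable f nu) : ∫ x, f x ∂mu ≤ ∫ x, f x ∂nu := by
  rw [← ENNReal.ofReal_le_ofReal_iff (integral_nonneg hf0),
    ofReal_integral_eq_lintegral_ofReal hmu (ae_of_all _ hf0),
    ofReal_integral_eq_lintegral_ofReal hnu (ae_of_all _ hf0)]
  exact hE f hf hf0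

section Potentials

variable {eta : Measure ℝ} [IsFiniteMeasure eta]

theorem integrable_max_const_sub_zero (hint : Integrable (fun x => x) eta) (k : ℝ) :
    Integrable (fun x => max (k - x) 0) eta :=
  ((integrable_const k).sub hint).pos_part

theorem integrable_max_sub_const_zero (hint : Integrable (fun x => x) eta) (k : ℝ) :
    Integrable (fun x => max (x - k) 0) eta :=
  (hint.sub (integrable_const k)).pos_part

theorem pot_sub_cpot (hint : Integrable (fun x => x) eta) (k : ℝ) :
    pot eta k - cpot eta k = k * (eta univ).toReal - ∫ x, x ∂eta := by
  have hparity : ∀ x : ℝ, max (k - x) 0 - max (x - k) 0 = k - x := fun x => by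
    rcases le_total x k with h | h
    · rw [max_eq_left (by linarith), max_eq_right (by linarith)]; ring
    · rw [max_eq_right (by linarith), max_eq_left (by linarith)]; ring
  rw [pot, cpot, ← integral_sub (integrable_max_const_sub_zero hint k)
    (integrable_max_sub_const_zero hint k)]
  simp_rw [hparity]
  rw [integral_sub (integrable_const k) hint, integral_const, smul_eq_mul, mul_comm]
  rfl

theorem tendsto_pot_atBot (hint : Integrable (fun x => x) eta) :
    Tendsto (pot eta) atBot (nhds 0) := by
  have hzero : ∫ _ : ℝ, (0 : ℝ) ∂eta = 0 := integral_zero ℝ ℝ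
  rw [← hzero]
  refine tendsto_integral_filter_of_dominated_convergence (fun x => |x|)
    (Eventually.of_forall fun k => (integrable_max_const_sub_zero hint k).aestronglyMeasurable) ?_
    hint.abs (ae_of_all _ fun x => ?_)
  · filter_upwards [eventually_le_atBot 0] with k hk
    refine ae_of_all _ fun x => ?_
    rw [Real.norm_of_nonneg (le_max_right _ _)]
    exact max_le (by linarith [neg_abs_le x]) (abs_nonneg x)
  · refine tendsto_const_nhds.congr' ?_
    filter_upwards [eventually_le_atBot x] with k hk
    exact (max_eq_right (by linarith)).symm

theorem tendsto_cpot_atTop (hint : Integrable (fun x => x) eta) :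
    Tendsto (cpot eta) atTop (nhds 0) := by
  have hzero : ∫ _ : ℝ, (0 : ℝ) ∂eta = 0 := integral_zero ℝ ℝ
  rw [← hzero]
  refine tendsto_integral_filter_of_dominated_convergence (fun x => |x|)
    (Eventually.of_forall fun k => (integrable_max_sub_const_zero hint k).aestronglyMeasurable) ?_
    hint.abs (ae_of_all _ fun x => ?_)
  · filter_upwards [eventually_ge_atTop 0] with k hk
    refine ae_of_all _ fun x => ?_
    rw [Real.norm_of_nonneg (le_max_right _ _)]
    exact max_le (by linarith [le_abs_self x]) (abs_nonneg x)
  · refine tendsto_const_nhds.congr' ?_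
    filter_upwards [eventually_ge_atTop x] with k hk
    exact (max_eq_right (by linarith)).symm

end Potentials

section ExtendedConvexOrder

variable {mu nu : Measure ℝ} [IsFiniteMeasure mu] [IsFiniteMeasure nu]

theorem ECx.pot_le (hE : ECx mu nu) (hintm : Integrable (fun x => x) mu)
    (hintn : Integrable (fun x => x) nu) (k : ℝ) : pot mu k ≤ pot nu k :=
  hE.integral_le_s12 (((convexOn_const k convex_univ).sub (concaveOn_id convex_univ)).sup
      (convexOn_const 0 convex_univ)) (fun _ => le_max_right _ _)
    (integrable_max_const_sub_zero hintm k) (integrable_max_const_sub_zero hintn k)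

theorem ECx.cpot_le (hE : ECx mu nu) (hintm : Integrable (fun x => x) mu)
    (hintn : Integrable (fun x => x) nu) (k : ℝ) : cpot mu k ≤ cpot nu k :=
  hE.integral_le_s12 (((convexOn_id convex_univ).sub (concaveOn_const k convex_univ)).sup
      (convexOn_const 0 convex_univ)) (fun _ => le_max_right _ _)
    (integrable_max_sub_const_zero hintm k) (integrable_max_sub_const_zero hintn k)

end ExtendedConvexOrder

theorem stmt12 (mu nu : Measure ℝ) [IsFiniteMeasure mu] [IsFiniteMeasure nu]
    (hintm : Integrable (fun x => x) mu) (hintn : Integrable (fun x => x) nu)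
    (hE : ECx mu nu) (c : ℝ → ℝ)
    (hc : IsConvexHull (fun k => pot nu k - pot mu k) c) :
    MemD ((nu Set.univ).toReal - (mu Set.univ).toReal) (∫ x, x ∂nu - ∫ x, x ∂mu) c := by
  obtain ⟨hconvex, hle_diff, hlargest⟩ := hc
  set a := (nu Set.univ).toReal - (mu Set.univ).toReal
  set b := ∫ x, x ∂nu - ∫ x, x ∂mu
  have hgap : ∀ k, pot nu k - pot mu k - (a * k - b) = cpot nu k - cpot mu k := fun k => by
    linear_combination pot_sub_cpot hintn k - pot_sub_cpot hintm k
  have hminorant : ∀ k, max (a * k - b) 0 ≤ c k :=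
    hlargest _ (convexOn_max_affine_zero a b) fun k =>
      max_le (by linarith [hgap k, hE.cpot_le hintm hintn k])
        (sub_nonneg.2 (hE.pot_le hintm hintn k))
  have hnonneg : ∀ k, 0 ≤ c k := fun k => (le_max_right _ _).trans (hminorant k)
  have hbot : Tendsto c atBot (nhds 0) :=
    tendsto_of_tendsto_of_tendsto_of_le_of_le tendsto_const_nhds
      (by simpa using (tendsto_pot_atBot hintn).sub (tendsto_pot_atBot hintm)) hnonneg hle_diff
  have htop : Tendsto (fun z => c z - (a * z - b)) atTop (nhds 0) :=
    tendsto_of_tendsto_of_tendsto_of_le_of_le tendsto_const_nhds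
      (by simpa using (tendsto_cpot_atTop hintn).sub (tendsto_cpot_atTop hintm))
      (fun z => sub_nonneg.2 ((le_max_left _ _).trans (hminorant z)))
      (fun z => by linarith [hle_diff z, hgap z])
  exact ⟨hconvex, hconvex.monotone_of_tendsto_atBot hbot, hnonneg, hbot, htop⟩
end
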